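/- Let K be a number field with ring of integers O, let (g, 𝔭, 𝔟, 𝔠) be a generalized Mori quadruple in K, and let F(x) = x^{2g+1} − 𝔟·x − 𝔠/4 ∈ O[1/2][x] ⊂ K[x]. Assume there exists a maximal ideal 𝔟₂ ⊂ O of residual characteristic 2 whose ramification index e(𝔟₂) over 2 in K/ℚ is relatively prime to 2g+1. Then F(x) is irreducible over the completion K_{𝔟₂}, hence irreducible over K, and the Galois extension K(R_F)/K is ramified at 𝔟₂. -/

import Mathlib

open Polynomial NumberField IsDedekindDomain

noncomputable section

set_option synthInstance.maxHeartbeats 1000000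
set_option maxHeartbeats 1000000

variable (K : Type) [Field K] [NumberField K]

/-- `(g, 𝔭, bb, cc)` is a generalized Mori quadruple in the number field `K`:
`g` is a positive integer; `𝔭` is a maximal ideal of `𝓞 K` of odd residual characteristic
and residue cardinality `q` such that every prime divisor of `g` divides `(q-1)/2`;
`bb mod 𝔭` generates the multiplicative group of the residue field (has order `q-1`);
`cc ∈ 𝔭`, `cc - 1 ∈ 2·𝓞 K`, and `bb·O + cc·O = bb·O + (2g+1)·O = 2g·O + cc·O = O`. -/
def IsGenMoriQuadruple (g : ℕ) (𝔭 : Ideal (𝓞 K)) (bb cc : 𝓞 K) : Prop :=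
  0 < g ∧ 𝔭.IsMaximal ∧ (2 : 𝓞 K) ∉ 𝔭 ∧
    (∀ r : ℕ, r.Prime → r ∣ g → r ∣ (Nat.card ((𝓞 K) ⧸ 𝔭) - 1) / 2) ∧
    orderOf (Ideal.Quotient.mk 𝔭 bb) = Nat.card ((𝓞 K) ⧸ 𝔭) - 1 ∧
    cc ∈ 𝔭 ∧ cc - 1 ∈ Ideal.span {(2 : 𝓞 K)} ∧
    Ideal.span {bb} ⊔ Ideal.span {cc} = ⊤ ∧
    Ideal.span {bb} ⊔ Ideal.span {((2 * g + 1 : ℕ) : 𝓞 K)} = ⊤ ∧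
    Ideal.span {((2 * g : ℕ) : 𝓞 K)} ⊔ Ideal.span {cc} = ⊤

/-- The generalized Mori trinomial `F(x) = x^(2g+1) - bb·x - cc/4 ∈ K[x]`. -/
def genMoriPoly (g : ℕ) (bb cc : 𝓞 K) : K[X] :=
  X ^ (2 * g + 1) - Polynomial.C (algebraMap (𝓞 K) K bb) * X
    - Polynomial.C (algebraMap (𝓞 K) K cc / 4)

/-!
Write `n = 2g + 1` and `e = e(𝔟₂ | 2)`. Since `cc ≡ 1 mod 2`, the `𝔟₂`-adic valuation of the
constant term `cc / 4` is `-2e`, while `bb` is integral, so the Newton polygon of `F` at `𝔟₂` is the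
single segment from `(0, -2e)` to `(n, 0)`; its slope `2e / n` is in lowest terms because `n` is odd
and prime to `e`. By Dumas' criterion, which is Gauss's lemma for the Gauss valuation weighted along
that slope, `F` is irreducible over `K_𝔟₂`, hence over `K`. In the splitting field, a root `α` of
`F` and a prime `Q` above `𝔟₂` satisfy `n · w_Q(α) = -2e · e(Q | 𝔟₂)`, so `n ∣ e(Q | 𝔟₂)`.
-/

open Finset.HasAntidiagonal WithZero

namespace Valuation

variable {R Γ₀ : Type*} [CommRing R] [LinearOrderedCommGroupWithZero Γ₀] (v : Valuation R Γ₀)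

lemma exists_least_max_weighted_coeff (t : Γ₀) (p : R[X]) :
    ∃ i, (∀ k, v (p.coeff k) * t ^ k ≤ v (p.coeff i) * t ^ i) ∧
      ∀ k < i, v (p.coeff k) * t ^ k < v (p.coeff i) * t ^ i := by
  classical
  set a : ℕ → Γ₀ := fun k ↦ v (p.coeff k) * t ^ k
  have hmax : ∃ i, ∀ k, a k ≤ a i := by
    obtain ⟨i, -, hi⟩ := (Finset.range (p.natDegree + 1)).exists_max_image a ⟨0, by simp⟩
    refine ⟨i, fun k ↦ ?_⟩
    rcases le_or_gt k p.natDegree with hk | hk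
    · exact hi k (Finset.mem_range.mpr (Nat.lt_succ_of_le hk))
    · simp [a, coeff_eq_zero_of_natDegree_lt hk]
  exact ⟨Nat.find hmax, Nat.find_spec hmax, fun k hk ↦
    lt_of_not_ge fun h ↦ Nat.find_min hmax hk fun j ↦ (Nat.find_spec hmax j).trans h⟩

/-- Gauss's lemma `|p| * |q| ≤ |p * q|` for the weighted Gauss valuation
`|p| = max_k v (p.coeff k) * t ^ k`. -/
theorem exists_weighted_coeff_mul_le (t : Γ₀) (p q : R[X]) (i j : ℕ) :
    ∃ k, v (p.coeff i) * t ^ i * (v (q.coeff j) * t ^ j) ≤ v ((p * q).coeff k) * t ^ k := by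
  obtain ⟨i₀, hp_le, hp_lt⟩ := v.exists_least_max_weighted_coeff t p
  obtain ⟨j₀, hq_le, hq_lt⟩ := v.exists_least_max_weighted_coeff t q
  refine ⟨i₀ + j₀, (mul_le_mul' (hp_le i) (hq_le j)).trans ?_⟩
  set A := v (p.coeff i₀) * t ^ i₀
  set B := v (q.coeff j₀) * t ^ j₀
  rcases eq_or_ne (A * B) 0 with h0 | h0
  · rw [h0]; exact zero_le
  have hA : 0 < A := zero_lt_iff.mpr (left_ne_zero_of_mul h0)
  have hB : 0 < B := zero_lt_iff.mpr (right_ne_zero_of_mul h0)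
  have weight (x y : ℕ) : v (p.coeff x * q.coeff y) * t ^ (x + y) =
      v (p.coeff x) * t ^ x * (v (q.coeff y) * t ^ y) := by
    rw [map_mul, pow_add, mul_mul_mul_comm]
  -- choosing `i₀`, `j₀` least makes `(i₀, j₀)` the unique dominant term of the coefficient
  have hdom : ∀ x ∈ antidiagonal (i₀ + j₀) \ {(i₀, j₀)},
      v (p.coeff x.1 * q.coeff x.2) < v (p.coeff i₀ * q.coeff j₀) := by
    rintro ⟨x, y⟩ hxy
    simp only [Finset.mem_sdiff, mem_antidiagonal, Finset.mem_singleton, Prod.mk.injEq] at hxy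
    have hlt : v (p.coeff x) * t ^ x * (v (q.coeff y) * t ^ y) < A * B := by
      rcases lt_or_ge x i₀ with hx | hx
      · exact mul_lt_mul_of_lt_of_le_of_nonneg_of_pos (hp_lt x hx) (hq_le y) zero_le hB
      · exact mul_lt_mul_of_le_of_lt_of_nonneg_of_pos (hp_le x) (hq_lt y (by omega)) zero_le hA
    rw [← weight, ← weight, hxy.1] at hlt
    exact lt_of_mul_lt_mul_right' hlt
  rw [coeff_mul, v.map_sum_eq_of_lt (by simp) hdom, weight]

/-- `hf` says that the Newton polygon of `f` is a single segment; then the constant coefficient of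
every monic factor lies on it (Dumas). -/
theorem map_coeff_zero_pow_of_monic_mul_eq {f g h : R[X]} (hg : g.Monic) (hh : h.Monic)
    (hgh : g * h = f) (h0 : v (f.coeff 0) ≠ 0)
    (hf : ∀ i, v (f.coeff i) ^ f.natDegree * v (f.coeff 0) ^ i ≤ v (f.coeff 0) ^ f.natDegree) :
    v (g.coeff 0) ^ f.natDegree = v (f.coeff 0) ^ g.natDegree := by
  set n := f.natDegree
  set C := v (f.coeff 0)
  have hdeg : g.natDegree + h.natDegree = n := by rw [← hg.natDegree_mul hh, hgh]
  rcases Nat.eq_zero_or_pos n with hn | hn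
  · rw [hn, show g.natDegree = 0 by omega, pow_zero, pow_zero]
  have hC : 0 < C := zero_lt_iff.mpr h0
  -- `x ↦ v x ^ n` is again a valuation; its `C`-weighted Gauss valuation of `f` is `C ^ n`
  let w := v.map (powMonoidWithZeroHom hn.ne') fun _ _ h ↦ pow_le_pow_left' h n
  have hw (x : R) : w x = v x ^ n := rfl
  have bound {p q : R[X]} (hp : p.Monic) (hq : q.Monic) (hpq : p * q = f) :
      v (p.coeff 0) ^ n ≤ C ^ p.natDegree := by
    obtain ⟨k, hk⟩ := w.exists_weighted_coeff_mul_le C p q 0 q.natDegree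
    rw [hpq, hq.coeff_natDegree, hw, hw, map_one, one_pow, pow_zero, mul_one, one_mul] at hk
    have hk' : v (p.coeff 0) ^ n * C ^ q.natDegree ≤ C ^ p.natDegree * C ^ q.natDegree := by
      rw [← pow_add, ← hp.natDegree_mul hq, hpq]
      exact hk.trans (hf k)
    exact le_of_mul_le_mul_right hk' (pow_pos hC _)
  have hprod : v (g.coeff 0) ^ n * v (h.coeff 0) ^ n = C ^ g.natDegree * C ^ h.natDegree := by
    rw [← mul_pow, ← map_mul, ← mul_coeff_zero, hgh, ← pow_add, hdeg]
  refine le_antisymm (bound hg hh hgh) (not_lt.mp fun hlt ↦ ?_)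
  exact (mul_lt_mul_of_lt_of_le_of_nonneg_of_pos hlt (bound hh hg (by rw [mul_comm, hgh]))
    zero_le (pow_pos hC _)).ne hprod

end Valuation

lemma WithZero.natCast_dvd_of_pow_eq_exp {x : ℤᵐ⁰} {n : ℕ} {m : ℤ} (h : x ^ n = exp m) :
    (n : ℤ) ∣ m :=
  ⟨log x, by rw [← log_exp m, ← h, log_pow, nsmul_eq_mul]⟩

theorem Polynomial.Monic.irreducible_of_dumas {R : Type*} [CommRing R] [NoZeroDivisors R]
    (v : Valuation R ℤᵐ⁰) {f : R[X]} (hf : f.Monic) (hn : 0 < f.natDegree) {c : ℤ}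
    (h0 : v (f.coeff 0) = exp c) (hcop : IsCoprime (f.natDegree : ℤ) c)
    (hnewton : ∀ i, v (f.coeff i) ^ f.natDegree * exp c ^ i ≤ exp c ^ f.natDegree) :
    Irreducible f := by
  refine hf.irreducible_iff_natDegree.mpr ⟨fun h1 ↦ by simp [h1] at hn, fun g h hg hh hgh ↦ ?_⟩
  have hdeg : g.natDegree + h.natDegree = f.natDegree := by rw [← hgh, hg.natDegree_mul hh]
  have key := v.map_coeff_zero_pow_of_monic_mul_eq hg hh hgh (by simp [h0]) (by rwa [h0])
  rw [h0, ← exp_nsmul, nsmul_eq_mul] at key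
  have hdvd : f.natDegree ∣ g.natDegree :=
    Int.natCast_dvd_natCast.mp (hcop.dvd_of_dvd_mul_right (natCast_dvd_of_pow_eq_exp key))
  rcases Nat.eq_zero_or_pos g.natDegree with hg0 | hg0
  · exact .inl hg0
  · exact .inr (by have := Nat.le_of_dvd hg0 hdvd; omega)

namespace Polynomial

variable {R : Type*} [CommRing R] {n : ℕ}

lemma monic_X_pow_sub_C_mul_X_sub_C (hn : 1 < n) (b a : R) : (X ^ n - C b * X - C a).Monic := by
  rw [sub_sub]
  exact monic_X_pow_sub (degree_linear_le.trans_lt (by exact_mod_cast hn))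

lemma natDegree_X_pow_sub_C_mul_X_sub_C [Nontrivial R] (hn : 1 < n) (b a : R) :
    (X ^ n - C b * X - C a).natDegree = n := by
  rw [sub_sub, natDegree_sub_eq_left_of_natDegree_lt, natDegree_X_pow]
  rw [natDegree_X_pow]
  exact natDegree_linear_le.trans_lt hn

lemma coeff_X_pow_sub_C_mul_X_sub_C (hn : 1 < n) (b a : R) (i : ℕ) :
    (X ^ n - C b * X - C a).coeff i =
      if i = 0 then -a else if i = 1 then -b else if i = n then 1 else 0 := by
  rcases i with _ | _ | i <;> simp [coeff_X, coeff_C, coeff_X_pow] <;> omega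

theorem irreducible_X_pow_sub_C_mul_X_sub_C [IsDomain R] (v : Valuation R ℤᵐ⁰) (hn : 1 < n)
    {b a : R} {c : ℤ} (hb : v b ≤ 1) (ha : v a = exp c) (hc : 0 ≤ c)
    (hcop : IsCoprime (n : ℤ) c) : Irreducible (X ^ n - C b * X - C a) := by
  have hdeg := natDegree_X_pow_sub_C_mul_X_sub_C hn b a
  have hc1 : 1 ≤ exp c := by simpa using exp_le_exp.mpr hc
  refine (monic_X_pow_sub_C_mul_X_sub_C hn b a).irreducible_of_dumas v (by omega) (c := c)
    (by simp [coeff_X_pow_sub_C_mul_X_sub_C hn, ha]) (by rwa [hdeg]) fun i ↦ ?_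
  rw [hdeg, coeff_X_pow_sub_C_mul_X_sub_C hn]
  split_ifs with h0 h1 hi
  · simp [h0, ha]
  · calc v (-b) ^ n * exp c ^ i ≤ exp c := by simpa [h1] using pow_le_one' hb n
      _ ≤ exp c ^ n := le_self_pow hc1 (by omega)
  · simp [hi]
  · simp [zero_pow (by omega : n ≠ 0)]

end Polynomial

theorem Valuation.pow_eq_of_isRoot_X_pow_sub_C_mul_X_sub_C {L Γ₀ : Type*} [CommRing L]
    [LinearOrderedCommGroupWithZero Γ₀] (W : Valuation L Γ₀) {n : ℕ} (hn : 1 < n) {b a α : L}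
    (hα : (X ^ n - C b * X - C a).IsRoot α) (hb : W b ≤ 1) (ha : 1 < W a) : W α ^ n = W a := by
  have hα' : α ^ n - b * α = a := by simpa [sub_eq_zero] using hα
  have hα1 : 1 < W α := by
    by_contra! h
    have := W.map_sub_le (x := α ^ n) (y := b * α) (by simpa using pow_le_one' h n)
      (by simpa using mul_le_one' hb h)
    exact (ha.trans_le (hα' ▸ this)).false
  have hlt : W (b * α) < W (α ^ n) := calc
    W (b * α) ≤ W α := by simpa using mul_le_of_le_one_left' hb
    _ < W α ^ n := lt_self_pow₀ hα1 hn
    _ = W (α ^ n) := (map_pow W α n).symm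
  rw [← hα', W.map_sub_eq_of_lt_left hlt, map_pow]

namespace IsDedekindDomain.HeightOneSpectrum

section AKLB

variable {A F B L : Type*} [CommRing A] [IsDedekindDomain A] [CommRing B] [IsDedekindDomain B]
  [Algebra A B] [Module.IsTorsionFree A B] [Field F] [Field L] [Algebra F L] [Algebra A F]
  [IsFractionRing A F] [Algebra A L] [IsScalarTower A F L] [Algebra B L] [IsFractionRing B L]
  [IsScalarTower A B L]

theorem dvd_ramificationIdx'_of_isRoot_X_pow_sub_C_mul_X_sub_C (v : HeightOneSpectrum A)
    (w : HeightOneSpectrum B) [w.asIdeal.LiesOver v.asIdeal] {n : ℕ} (hn : 1 < n) {b a : F}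
    {c : ℤ} (hb : v.valuation F b ≤ 1) (ha : v.valuation F a = exp c) (hc : 0 < c)
    (hcop : IsCoprime (n : ℤ) c) {α : L}
    (hα : (X ^ n - C (algebraMap F L b) * X - C (algebraMap F L a)).IsRoot α) :
    n ∣ v.asIdeal.ramificationIdx' w.asIdeal := by
  set e := v.asIdeal.ramificationIdx' w.asIdeal
  have he : e ≠ 0 := Ideal.IsDedekindDomain.ramificationIdx'_ne_zero_of_liesOver w.asIdeal v.ne_bot
  have hWb : w.valuation L (algebraMap F L b) ≤ 1 := by
    rw [← valuation_liesOver L v w]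
    exact pow_le_one' hb e
  have hWa : w.valuation L (algebraMap F L a) = exp (e * c) := by
    rw [← valuation_liesOver L v w, ha, ← exp_nsmul, nsmul_eq_mul]
  have hα' := (w.valuation L).pow_eq_of_isRoot_X_pow_sub_C_mul_X_sub_C hn hα hWb
    (by rw [hWa, ← exp_zero, exp_lt_exp]; positivity)
  rw [hWa] at hα'
  exact Int.natCast_dvd_natCast.mp (hcop.dvd_of_dvd_mul_right (natCast_dvd_of_pow_eq_exp hα'))

end AKLB

theorem irreducible_map_adicCompletion_X_pow_sub_C_mul_X_sub_C {R F : Type*} [CommRing R]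
    [IsDedekindDomain R] [Field F] [Algebra R F] [IsFractionRing R F] (v : HeightOneSpectrum R)
    {n : ℕ} (hn : 1 < n) {b a : F} {c : ℤ} (hb : v.valuation F b ≤ 1)
    (ha : v.valuation F a = exp c) (hc : 0 ≤ c) (hcop : IsCoprime (n : ℤ) c) :
    Irreducible ((X ^ n - C b * X - C a).map (algebraMap F (v.adicCompletion F))) := by
  simp only [Polynomial.map_sub, Polynomial.map_pow, map_X, Polynomial.map_mul, map_C]
  refine irreducible_X_pow_sub_C_mul_X_sub_C Valued.v hn ?_ ?_ hc hcop
  · exact (adicCompletion.valued_coe F v b).trans_le hb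
  · exact (adicCompletion.valued_coe F v a).trans ha

theorem exists_liesOver_dvd_ramificationIdx'_splittingField {F : Type*} [Field F] [NumberField F]
    (v : HeightOneSpectrum (𝓞 F)) {n : ℕ} (hn : 1 < n) {b a : F} {c : ℤ}
    (hb : v.valuation F b ≤ 1) (ha : v.valuation F a = exp c) (hc : 0 < c)
    (hcop : IsCoprime (n : ℤ) c) {f : F[X]} (hf : f = X ^ n - C b * X - C a) :
    ∃ Q : Ideal (𝓞 f.SplittingField), Q.IsMaximal ∧
      Q.LiesOver v.asIdeal ∧ n ∣ v.asIdeal.ramificationIdx' Q := by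
  have : NumberField f.SplittingField := .of_module_finite F _
  obtain ⟨Q, hQ, _⟩ := Ideal.exists_maximal_ideal_liesOver_of_isIntegral (S := 𝓞 f.SplittingField)
    v.asIdeal
  let w : HeightOneSpectrum (𝓞 f.SplittingField) :=
    ⟨Q, hQ.isPrime, Ideal.ne_bot_of_liesOver_of_ne_bot v.ne_bot Q⟩
  obtain ⟨α, hα⟩ := (SplittingField.splits f).exists_eval_eq_zero <| ne_of_gt <|
    natDegree_pos_iff_degree_pos.mp <| by
      rw [natDegree_map, hf, natDegree_X_pow_sub_C_mul_X_sub_C hn]; omega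
  refine ⟨Q, hQ, inferInstance, dvd_ramificationIdx'_of_isRoot_X_pow_sub_C_mul_X_sub_C v w hn hb ha
    hc hcop (α := α) ?_⟩
  simpa [hf] using hα

variable {R : Type*} [CommRing R] [IsDedekindDomain R] [CharZero R]

theorem intValuation_two_of_mem (w : HeightOneSpectrum R) (h2 : (2 : R) ∈ w.asIdeal) :
    w.intValuation 2 = exp (-(Ideal.ramificationIdx' (Ideal.span {(2 : ℤ)}) w.asIdeal : ℤ)) := by
  have hmax : (Ideal.span {(2 : ℤ)}).IsMaximal :=
    PrincipalIdealRing.isMaximal_of_irreducible Int.prime_two.irreducible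
  let v₂ : HeightOneSpectrum ℤ := ⟨_, hmax.isPrime, by simp⟩
  have : w.asIdeal.LiesOver v₂.asIdeal := ⟨hmax.eq_of_le (Ideal.comap_ne_top _ w.isPrime.ne_top)
    (by simpa [Ideal.span_le] using h2)⟩
  have h := intValuation_liesOver v₂ w 2
  rw [intValuation_singleton v₂ two_ne_zero rfl, map_ofNat, ← exp_nsmul] at h
  simp [← h, v₂]

theorem valuation_div_four_of_mem (w : HeightOneSpectrum R) (h2 : (2 : R) ∈ w.asIdeal)
    (F : Type*) [Field F] [Algebra R F] [IsFractionRing R F] {c : R} (hc : c ∉ w.asIdeal) :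
    w.valuation F (algebraMap R F c / 4) =
      exp (2 * Ideal.ramificationIdx' (Ideal.span {(2 : ℤ)}) w.asIdeal : ℤ) := by
  have h4 : (4 : F) = algebraMap R F (2 ^ 2) := by rw [map_pow, map_ofNat]; norm_num
  rw [map_div₀, h4, valuation_of_algebraMap, valuation_of_algebraMap, map_pow,
    intValuation_eq_one_iff.mpr hc, intValuation_two_of_mem w h2, ← exp_nsmul, one_div, ← exp_neg]
  congr 1
  simp

end IsDedekindDomain.HeightOneSpectrum

open IsDedekindDomain.HeightOneSpectrum

/-- For a generalized Mori quadruple in `K` and a prime `𝔟₂` of `K` above `2` whose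
ramification index over `2` is coprime to `2g+1`: the polynomial `F` is irreducible over
the completion `K_{𝔟₂}`, hence over `K`, and the splitting field extension `K(R_F)/K` is
ramified at `𝔟₂`. -/
theorem gen_mori_irreducible_and_ramified
    (g : ℕ) (𝔭 : Ideal (𝓞 K)) (bb cc : 𝓞 K)
    (h : IsGenMoriQuadruple K g 𝔭 bb cc)
    (𝔟₂ : Ideal (𝓞 K)) (h𝔟₂ : 𝔟₂.IsMaximal) (h2 : (2 : 𝓞 K) ∈ 𝔟₂)
    (hcop : Nat.Coprime
      (Ideal.ramificationIdx' (Ideal.span {(2 : ℤ)}) 𝔟₂)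
      (2 * g + 1)) :
    (∀ v : HeightOneSpectrum (𝓞 K), v.asIdeal = 𝔟₂ →
      Irreducible ((genMoriPoly K g bb cc).map (algebraMap K (v.adicCompletion K)))) ∧
    Irreducible (genMoriPoly K g bb cc) ∧
    ∃ Q : Ideal (𝓞 (genMoriPoly K g bb cc).SplittingField), Q.IsMaximal ∧
      Ideal.comap (algebraMap (𝓞 K) (𝓞 (genMoriPoly K g bb cc).SplittingField)) Q = 𝔟₂ ∧
      1 < Ideal.ramificationIdx' (S := 𝓞 (genMoriPoly K g bb cc).SplittingField) 𝔟₂ Q := by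
  obtain ⟨hg, -, -, -, -, -, hcc, -⟩ := h
  set e := Ideal.ramificationIdx' (Ideal.span {(2 : ℤ)}) 𝔟₂
  have hn : 1 < 2 * g + 1 := by omega
  have he : 0 < e := Nat.pos_of_ne_zero fun he ↦ by
    rw [he, Nat.coprime_zero_left] at hcop; omega
  have hcop' : IsCoprime ((2 * g + 1 : ℕ) : ℤ) (2 * e : ℤ) := by
    exact_mod_cast Nat.isCoprime_iff_coprime.mpr
      ((odd_two_mul_add_one g).coprime_two_right.mul_right hcop.symm)
  have hcc𝔟₂ : cc ∉ 𝔟₂ := fun hmem ↦ h𝔟₂.ne_top <| (Ideal.eq_top_iff_one _).mpr <| by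
    simpa using 𝔟₂.sub_mem hmem ((Ideal.span_singleton_le_iff_mem _).mpr h2 hcc)
  have hF : genMoriPoly K g bb cc = X ^ (2 * g + 1) - C (algebraMap (𝓞 K) K bb) * X -
      C (algebraMap (𝓞 K) K cc / 4) := rfl
  let v : HeightOneSpectrum (𝓞 K) := ⟨𝔟₂, h𝔟₂.isPrime, fun h ↦ two_ne_zero (by simp_all)⟩
  have hlocal : ∀ v : HeightOneSpectrum (𝓞 K), v.asIdeal = 𝔟₂ →
      Irreducible ((genMoriPoly K g bb cc).map (algebraMap K (v.adicCompletion K))) := by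
    rintro v rfl
    exact irreducible_map_adicCompletion_X_pow_sub_C_mul_X_sub_C v hn (valuation_le_one _ _)
      (valuation_div_four_of_mem v h2 K hcc𝔟₂) (by positivity) hcop'
  obtain ⟨Q, hQ, hQv, hdvd⟩ := exists_liesOver_dvd_ramificationIdx'_splittingField v hn
    (valuation_le_one _ _) (valuation_div_four_of_mem v h2 K hcc𝔟₂) (by positivity) hcop' hF
  have : NumberField (genMoriPoly K g bb cc).SplittingField := .of_module_finite K _
  refine ⟨hlocal, (monic_X_pow_sub_C_mul_X_sub_C hn _ _).irreducible_of_irreducible_map _ _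
    (hlocal v rfl), Q, hQ, hQv.over.symm, hn.trans_le (Nat.le_of_dvd ?_ hdvd)⟩
  exact Nat.pos_of_ne_zero (Ideal.IsDedekindDomain.ramificationIdx'_ne_zero_of_liesOver Q v.ne_bot)
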